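/- arXiv:1305.2664 — 4 statements merged into one kernel-verified Lean document; each statement's English description precedes it below -/
import Mathlib

section
/- Let k be a perfect field of characteristic p and W(k) its ring of Witt vectors. Let M be a finite free W(k)-module equipped with a Frobenius-semilinear endomorphism φ (semilinear over the Witt vector Frobenius). Then M decomposes as a direct sum M = M_unit ⊕ M_nil of φ-stable submodules, where φ is bijective on M_unit and topologically nilpotent on M_nil (i.e. φ^k(M_nil) → 0 p-adically as k → ∞). -/
/-!
Fix `Q = p ^ n M`. Since `M` is Noetherian and `M ⧸ Q` is Artinian, the preimages
`{x | φ^[j] x ∈ Q}` increase to a stable value and the images `φ^[j] M + Q` decrease to a stable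
value; as in Fitting's lemma these two stable submodules span `M` and meet in `Q`, and `φ` is
bijective modulo `Q` on the second one. `M_unit` and `M_nil` are the intersections over `n` of
these stable submodules. They meet only in `0` because `M` is `p`-adically separated. Every element
splits, and `φ` maps `M_unit` onto itself, because the level-`n` solutions of either problem are
unique modulo `p ^ n`, hence converge in the `p`-adically complete module `M`.
-/

open Function

section Precomplete

variable {R M ι : Type*} [CommRing R] [AddCommGroup M] [Module R M]

theorem Module.Basis.mem_smul_top_iff (b : Module.Basis ι R M) (I : Ideal R) {x : M} :
    x ∈ I • (⊤ : Submodule R M) ↔ ∀ i, b.repr x i ∈ I := by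
  refine ⟨fun hx i => ?_, fun h => ?_⟩
  · refine Submodule.smul_induction_on hx (fun a ha m _ => ?_) (fun x y hx hy => ?_)
    · simpa using I.mul_mem_right _ ha
    · simpa using I.add_mem hx hy
  · rw [← b.linearCombination_repr x, Finsupp.linearCombination_apply]
    exact Submodule.sum_mem _ fun i _ => Submodule.smul_mem_smul (h i) trivial

theorem Module.Basis.isPrecomplete [Finite ι] (b : Module.Basis ι R M) (I : Ideal R)
    [IsPrecomplete I R] : IsPrecomplete I M := by
  have := Fintype.ofFinite ι
  refine ⟨fun {f} hf => ?_⟩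
  have hcoord (i : ι) : ∃ L : R, ∀ n, b.repr (f n) i ≡ L [SMOD (I ^ n • ⊤ : Submodule R R)] :=
    IsPrecomplete.prec inferInstance fun {m n} hmn => by
      simpa [SModEq.sub_mem] using (b.mem_smul_top_iff (I ^ m)).1 (SModEq.sub_mem.1 (hf hmn)) i
  choose L hL using hcoord
  refine ⟨b.equivFun.symm L, fun n => SModEq.sub_mem.2 ((b.mem_smul_top_iff _).2 fun i => ?_)⟩
  have hLi : b.repr (b.equivFun.symm L) i = L i := congrFun (b.equivFun.apply_symm_apply L) i
  rw [map_sub, Finsupp.sub_apply, hLi]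
  simpa [SModEq.sub_mem] using hL i n

/-- If at every level `n` there are approximate solutions `P n`, any two of them congruent
modulo `I ^ n`, then there is an exact solution. -/
theorem IsPrecomplete.exists_forall_of_sub_mem {I : Ideal R} [IsPrecomplete I M]
    (P : ℕ → M → Prop) (hsucc : ∀ n x, P (n + 1) x → P n x) (hex : ∀ n, ∃ x, P n x)
    (hsub : ∀ n x y, P n x → P n y → x - y ∈ I ^ n • (⊤ : Submodule R M))
    (hadd : ∀ n x y, P n x → y - x ∈ I ^ n • (⊤ : Submodule R M) → P n y) :
    ∃ x, ∀ n, P n x := by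
  choose f hf using hex
  have hanti {m n : ℕ} (h : m ≤ n) {x : M} : P n x → P m x := by
    induction h with
    | refl => exact id
    | step _ ih => exact fun hx => ih (hsucc _ _ hx)
  obtain ⟨L, hL⟩ := IsPrecomplete.prec inferInstance fun {m n} hmn =>
    SModEq.sub_mem.2 (hsub m _ _ (hf m) (hanti hmn (hf n)))
  exact ⟨L, fun n => hadd n _ _ (hf n) (SModEq.sub_mem.1 (hL n).symm)⟩

end Precomplete

namespace LinearMap

section Iterate

variable {R M : Type*} [CommRing R] [AddCommGroup M] [Module R M] {σ : R →+* R}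

def iterate (φ : M →ₛₗ[σ] M) (j : ℕ) : M →ₛₗ[σ ^ j] M where
  toFun := φ^[j]
  map_add' := iterate_map_add φ j
  map_smul' c x := by
    induction j with
    | zero => rfl
    | succ j ih =>
      simp only [iterate_succ_apply', ih, map_smulₛₗ, pow_succ', RingHom.mul_def,
        RingHom.comp_apply]

@[simp]
theorem coe_iterate (φ : M →ₛₗ[σ] M) (j : ℕ) : ⇑(φ.iterate j) = φ^[j] := rfl

instance [RingHomSurjective σ] (j : ℕ) : RingHomSurjective (σ ^ j) :=
  ⟨by rw [RingHom.coe_pow]; exact (RingHomSurjective.is_surjective (σ := σ)).iterate j⟩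

end Iterate

/-! The submodules `fittingKer φ Q` and `fittingRange φ Q` are the preimages in `M` of the two
Fitting components of the endomorphism of `M ⧸ Q` induced by `φ`. -/

section FittingKer

variable {R M : Type*} [CommRing R] [AddCommGroup M] [Module R M] {σ : R →+* R}
  (φ : M →ₛₗ[σ] M) (Q : Submodule R M)

def fittingKer : Submodule R M := ⨆ j, Q.comap (φ.iterate j)

theorem le_fittingKer : Q ≤ φ.fittingKer Q :=
  le_iSup_of_le 0 le_rfl

theorem fittingKer_mono : Monotone φ.fittingKer :=
  fun _ _ h => iSup_mono fun _ => Submodule.comap_mono h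

variable {φ Q}

theorem monotone_comap_iterate (hQ : Set.MapsTo φ Q Q) :
    Monotone fun j => Q.comap (φ.iterate j) := by
  intro i j hij x hx
  simp only [Submodule.mem_comap, coe_iterate] at hx ⊢
  rw [← Nat.sub_add_cancel hij, iterate_add_apply]
  exact hQ.iterate _ hx

theorem mem_fittingKer (hQ : Set.MapsTo φ Q Q) {x : M} :
    x ∈ φ.fittingKer Q ↔ ∃ j, φ^[j] x ∈ Q :=
  Submodule.mem_iSup_of_directed _ (monotone_comap_iterate hQ).directed_le

theorem mapsTo_fittingKer (hQ : Set.MapsTo φ Q Q) :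
    Set.MapsTo φ (φ.fittingKer Q) (φ.fittingKer Q) := by
  intro x hx
  obtain ⟨j, hj⟩ := (mem_fittingKer hQ).1 hx
  exact (mem_fittingKer hQ).2 ⟨j, by rw [← iterate_succ_apply, iterate_succ_apply']; exact hQ hj⟩

theorem exists_fittingKer_eq [IsNoetherian R M] (hQ : Set.MapsTo φ Q Q) :
    ∃ J, φ.fittingKer Q = Q.comap (φ.iterate J) := by
  obtain ⟨J, hJ⟩ := monotone_stabilizes_iff_noetherian.2 inferInstance
    ⟨_, monotone_comap_iterate hQ⟩
  refine ⟨J, le_antisymm (iSup_le fun j => ?_) (le_iSup_of_le J le_rfl)⟩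
  rcases le_total j J with h | h
  · exact monotone_comap_iterate hQ h
  · exact (hJ j h).ge

end FittingKer

section FittingRange

variable {R M : Type*} [CommRing R] [AddCommGroup M] [Module R M] {σ : R →+* R}
  [RingHomSurjective σ] (φ : M →ₛₗ[σ] M) (Q : Submodule R M)

def fittingRange : Submodule R M := ⨅ j, Q ⊔ range (φ.iterate j)

theorem antitone_range_iterate : Antitone fun j => range (φ.iterate j) := by
  rintro i j hij _ ⟨y, rfl⟩
  refine ⟨φ^[j - i] y, ?_⟩
  simp only [coe_iterate]
  rw [← iterate_add_apply, Nat.add_sub_cancel' hij]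

theorem mem_sup_range_iterate {j : ℕ} {x : M} :
    x ∈ Q ⊔ range (φ.iterate j) ↔ ∃ y, x - φ^[j] y ∈ Q := by
  simp only [Submodule.mem_sup, mem_range, coe_iterate]
  constructor
  · rintro ⟨q, hq, _, ⟨y, rfl⟩, rfl⟩
    exact ⟨y, by simpa using hq⟩
  · rintro ⟨y, hy⟩
    exact ⟨_, hy, _, ⟨y, rfl⟩, sub_add_cancel x _⟩

theorem mem_fittingRange {x : M} :
    x ∈ φ.fittingRange Q ↔ ∀ j, ∃ y, x - φ^[j] y ∈ Q := by
  simp only [fittingRange, Submodule.mem_iInf, mem_sup_range_iterate]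

theorem le_fittingRange : Q ≤ φ.fittingRange Q :=
  le_iInf fun _ => le_sup_left

theorem fittingRange_mono : Monotone φ.fittingRange :=
  fun _ _ h => iInf_mono fun _ => sup_le_sup_right h _

theorem exists_fittingRange_eq [IsArtinian R (M ⧸ Q)] :
    ∃ J, φ.fittingRange Q = Q ⊔ range (φ.iterate J) := by
  obtain ⟨J, hJ⟩ := IsArtinian.monotone_stabilizes
    ⟨fun j => OrderDual.toDual ((range (φ.iterate j)).map Q.mkQ),
      fun i j h => Submodule.map_mono (antitone_range_iterate φ h)⟩
  refine ⟨J, le_antisymm (iInf_le _ J) (le_iInf fun j => ?_)⟩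
  rcases le_total j J with h | h
  · exact sup_le_sup_left (antitone_range_iterate φ h) Q
  · rw [← Submodule.comap_map_mkQ, ← Submodule.comap_map_mkQ]
    exact (congrArg (Submodule.comap Q.mkQ) (hJ j h)).le

variable {φ Q}

theorem mapsTo_fittingRange (hQ : Set.MapsTo φ Q Q) :
    Set.MapsTo φ (φ.fittingRange Q) (φ.fittingRange Q) := by
  intro x hx
  refine (mem_fittingRange φ Q).2 fun j => ?_
  obtain ⟨y, hy⟩ := (mem_fittingRange φ Q).1 hx j
  refine ⟨φ y, ?_⟩
  rw [← iterate_succ_apply, iterate_succ_apply', ← map_sub]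
  exact hQ hy

theorem fittingRange_inf_fittingKer_le [IsNoetherian R M] (hQ : Set.MapsTo φ Q Q) :
    φ.fittingRange Q ⊓ φ.fittingKer Q ≤ Q := by
  obtain ⟨J, hJ⟩ := exists_fittingKer_eq hQ
  rintro x ⟨hxR, hxK⟩
  rw [SetLike.mem_coe, hJ, Submodule.mem_comap, coe_iterate] at hxK
  obtain ⟨y, hy⟩ := (mem_fittingRange φ Q).1 hxR J
  have hyK : y ∈ φ.fittingKer Q := by
    refine (mem_fittingKer hQ).2 ⟨J + J, ?_⟩
    have := Q.sub_mem hxK (hQ.iterate J hy)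
    rwa [iterate_map_sub, sub_sub_cancel, ← iterate_add_apply] at this
  rw [hJ, Submodule.mem_comap, coe_iterate] at hyK
  simpa using Q.add_mem hy hyK

theorem mem_of_map_mem_of_mem_fittingRange [IsNoetherian R M] (hQ : Set.MapsTo φ Q Q) {x : M}
    (hx : x ∈ φ.fittingRange Q) (hφx : φ x ∈ Q) : x ∈ Q :=
  fittingRange_inf_fittingKer_le hQ ⟨hx, (mem_fittingKer hQ).2 ⟨1, hφx⟩⟩

theorem fittingRange_sup_fittingKer [IsArtinian R (M ⧸ Q)] (hQ : Set.MapsTo φ Q Q) :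
    φ.fittingRange Q ⊔ φ.fittingKer Q = ⊤ := by
  obtain ⟨J, hJ⟩ := exists_fittingRange_eq φ Q
  refine eq_top_iff.2 fun x _ => Submodule.mem_sup.2 ?_
  have hφx : φ^[J] x ∈ φ.fittingRange Q := by
    rw [hJ]
    exact (mem_sup_range_iterate φ Q).2 ⟨x, by simp⟩
  obtain ⟨z, hz⟩ := (mem_fittingRange φ Q).1 hφx (J + J)
  refine ⟨φ^[J] z, ?_, x - φ^[J] z, (mem_fittingKer hQ).2 ⟨J, ?_⟩, add_sub_cancel _ _⟩
  · rw [hJ]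
    exact (mem_sup_range_iterate φ Q).2 ⟨z, by simp⟩
  · rwa [iterate_map_sub, ← iterate_add_apply]

theorem exists_map_sub_mem_of_mem_fittingRange [IsArtinian R (M ⧸ Q)] {y : M}
    (hy : y ∈ φ.fittingRange Q) : ∃ z ∈ φ.fittingRange Q, φ z - y ∈ Q := by
  obtain ⟨J, hJ⟩ := exists_fittingRange_eq φ Q
  obtain ⟨w, hw⟩ := (mem_fittingRange φ Q).1 hy (J + 1)
  refine ⟨φ^[J] w, ?_, ?_⟩
  · rw [hJ]
    exact (mem_sup_range_iterate φ Q).2 ⟨w, by simp⟩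
  · rw [← iterate_succ_apply' φ J, ← neg_sub]
    exact Q.neg_mem hw

end FittingRange

section Adic

variable {R M : Type*} [CommRing R] [AddCommGroup M] [Module R M] {σ : R →+* R}
  (φ : M →ₛₗ[σ] M)

theorem mapsTo_pow_smul_top {I : Ideal R} (hI : I ≤ I.comap σ) (n : ℕ) :
    Set.MapsTo φ (I ^ n • ⊤ : Submodule R M) (I ^ n • ⊤ : Submodule R M) := by
  have hIn : I ^ n ≤ (I ^ n).comap σ := (Ideal.pow_right_mono hI n).trans (Ideal.le_comap_pow σ n)
  intro x hx
  refine Submodule.smul_induction_on (p := fun x => φ x ∈ (I ^ n • ⊤ : Submodule R M)) hx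
    (fun a ha m _ => ?_) (fun x y hx hy => ?_)
  · rw [map_smulₛₗ]
    exact Submodule.smul_mem_smul (hIn ha) trivial
  · rw [map_add]
    exact Submodule.add_mem _ hx hy

variable (I : Ideal R)

def nilPart : Submodule R M := ⨅ n, φ.fittingKer (I ^ n • ⊤)

def unitPart [RingHomSurjective σ] : Submodule R M := ⨅ n, φ.fittingRange (I ^ n • ⊤)

variable {φ I}

theorem mapsTo_nilPart (hI : I ≤ I.comap σ) : Set.MapsTo φ (φ.nilPart I) (φ.nilPart I) :=
  fun _ hx => Submodule.mem_iInf _ |>.2 fun n =>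
    mapsTo_fittingKer (mapsTo_pow_smul_top φ hI n) (Submodule.mem_iInf _ |>.1 hx n)

theorem exists_iterate_mem_of_mem_nilPart [IsNoetherian R M] (hI : I ≤ I.comap σ) (n : ℕ) :
    ∃ K, ∀ x ∈ φ.nilPart I, φ^[K] x ∈ (I ^ n • ⊤ : Submodule R M) := by
  obtain ⟨K, hK⟩ := exists_fittingKer_eq (mapsTo_pow_smul_top φ hI n)
  refine ⟨K, fun x hx => ?_⟩
  have := Submodule.mem_iInf _ |>.1 hx n
  rwa [hK] at this

variable [RingHomSurjective σ]

theorem mapsTo_unitPart (hI : I ≤ I.comap σ) : Set.MapsTo φ (φ.unitPart I) (φ.unitPart I) :=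
  fun _ hx => Submodule.mem_iInf _ |>.2 fun n =>
    mapsTo_fittingRange (mapsTo_pow_smul_top φ hI n) (Submodule.mem_iInf _ |>.1 hx n)

theorem disjoint_unitPart_nilPart [IsNoetherian R M] [IsHausdorff I M] (hI : I ≤ I.comap σ) :
    Disjoint (φ.unitPart I) (φ.nilPart I) := by
  rw [disjoint_iff, eq_bot_iff, ← ‹IsHausdorff I M›.iInf_pow_smul]
  exact le_iInf fun n => (inf_le_inf (iInf_le _ n) (iInf_le _ n)).trans
    (fittingRange_inf_fittingKer_le (mapsTo_pow_smul_top φ hI n))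

theorem codisjoint_unitPart_nilPart [IsNoetherian R M] [IsPrecomplete I M] (hI : I ≤ I.comap σ)
    (hArt : ∀ n, IsArtinian R (M ⧸ (I ^ n • ⊤ : Submodule R M))) :
    Codisjoint (φ.unitPart I) (φ.nilPart I) := by
  refine codisjoint_iff.2 (eq_top_iff.2 fun x _ => ?_)
  have hQ n := mapsTo_pow_smul_top φ hI n
  obtain ⟨u, hu⟩ := IsPrecomplete.exists_forall_of_sub_mem (I := I)
    (fun n u => u ∈ φ.fittingRange (I ^ n • ⊤) ∧ x - u ∈ φ.fittingKer (I ^ n • ⊤))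
    (fun n _ h => ⟨fittingRange_mono φ (Submodule.pow_smul_top_le I M n.le_succ) h.1,
      fittingKer_mono φ (Submodule.pow_smul_top_le I M n.le_succ) h.2⟩)
    (fun n => by
      have := hArt n
      obtain ⟨u, hu, v, hv, rfl⟩ :=
        Submodule.mem_sup.1 ((fittingRange_sup_fittingKer (hQ n)).ge (Submodule.mem_top (x := x)))
      exact ⟨u, hu, by simpa using hv⟩)
    (fun n u v hu hv => fittingRange_inf_fittingKer_le (hQ n)
      ⟨Submodule.sub_mem _ hu.1 hv.1, by simpa using Submodule.sub_mem _ hv.2 hu.2⟩)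
    (fun n u v hu huv => by
      refine ⟨by simpa using Submodule.add_mem _ hu.1 (le_fittingRange φ _ huv), ?_⟩
      simpa using Submodule.sub_mem _ hu.2 (le_fittingKer φ _ huv))
  exact Submodule.mem_sup.2 ⟨u, Submodule.mem_iInf _ |>.2 fun n => (hu n).1,
    x - u, Submodule.mem_iInf _ |>.2 fun n => (hu n).2, add_sub_cancel _ _⟩

theorem injOn_unitPart [IsNoetherian R M] [IsHausdorff I M] (hI : I ≤ I.comap σ) :
    Set.InjOn φ (φ.unitPart I) := by
  intro x hx y hy hxy
  refine (IsHausdorff.eq_iff_smodEq (I := I)).2 fun n => SModEq.sub_mem.2 ?_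
  have hxyR : x - y ∈ φ.fittingRange (I ^ n • ⊤) :=
    Submodule.sub_mem _ (Submodule.mem_iInf _ |>.1 hx n) (Submodule.mem_iInf _ |>.1 hy n)
  exact mem_of_map_mem_of_mem_fittingRange (mapsTo_pow_smul_top φ hI n) hxyR (by simp [hxy])

theorem surjOn_unitPart [IsNoetherian R M] [IsHausdorff I M] [IsPrecomplete I M]
    (hI : I ≤ I.comap σ) (hArt : ∀ n, IsArtinian R (M ⧸ (I ^ n • ⊤ : Submodule R M))) :
    Set.SurjOn φ (φ.unitPart I) (φ.unitPart I) := by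
  intro y hy
  have hQ n := mapsTo_pow_smul_top φ hI n
  obtain ⟨z, hz⟩ := IsPrecomplete.exists_forall_of_sub_mem (I := I)
    (fun n z => z ∈ φ.fittingRange (I ^ n • ⊤) ∧ φ z - y ∈ (I ^ n • ⊤ : Submodule R M))
    (fun n _ h => ⟨fittingRange_mono φ (Submodule.pow_smul_top_le I M n.le_succ) h.1,
      Submodule.pow_smul_top_le I M n.le_succ h.2⟩)
    (fun n => by
      have := hArt n
      exact exists_map_sub_mem_of_mem_fittingRange (Submodule.mem_iInf _ |>.1 hy n))
    (fun n z w hz hw => mem_of_map_mem_of_mem_fittingRange (hQ n)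
      (Submodule.sub_mem _ hz.1 hw.1) (by simpa using Submodule.sub_mem _ hz.2 hw.2))
    (fun n z w hz hzw => by
      refine ⟨by simpa using Submodule.add_mem _ hz.1 (le_fittingRange φ _ hzw), ?_⟩
      simpa using Submodule.add_mem _ hz.2 (hQ n hzw))
  refine ⟨z, Submodule.mem_iInf _ |>.2 fun n => (hz n).1, ?_⟩
  exact (IsHausdorff.eq_iff_smodEq (I := I)).2 fun n => SModEq.sub_mem.2 (hz n).2

end Adic

end LinearMap

theorem isArtinian_quotient_smul_top {R M : Type*} [CommRing R] [AddCommGroup M] [Module R M]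
    [Module.Finite R M] (I : Ideal R) [IsArtinianRing (R ⧸ I)] :
    IsArtinian R (M ⧸ I • (⊤ : Submodule R M)) :=
  isArtinian_of_surjective_algebraMap (R := R ⧸ I) Ideal.Quotient.mk_surjective

theorem isArtinianRing_quotient_span_singleton_pow {R : Type*} [CommRing R] [IsDomain R]
    [IsNoetherianRing R] [Ring.KrullDimLE 1 R] {x : R} (hx : x ≠ 0) (n : ℕ) :
    IsArtinianRing (R ⧸ Ideal.span {x} ^ n) := by
  rw [Ideal.span_singleton_pow]
  have hlen := isFiniteLength_quotient_span_singleton R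
    (mem_nonZeroDivisors_of_ne_zero (pow_ne_zero n hx))
  exact isArtinian_of_tower R (isFiniteLength_iff_isNoetherian_isArtinian.1 hlen).2

theorem Ideal.span_natCast_le_comap {R : Type*} [CommRing R] (σ : R →+* R) (n : ℕ) :
    Ideal.span {(n : R)} ≤ (Ideal.span {(n : R)}).comap σ :=
  Ideal.span_le.2 <| Set.singleton_subset_iff.2 <| by simp

instance WittVector.ringHomSurjective_frobenius {p : ℕ} [Fact p.Prime] {k : Type*} [CommRing k]
    [CharP k p] [PerfectRing k p] :
    RingHomSurjective (WittVector.frobenius : WittVector p k →+* WittVector p k) :=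
  ⟨(WittVector.frobenius_bijective p k).2⟩

/-- For a finite free module `M` over the Witt vectors `𝕎 k` of a perfect field
`k` of characteristic `p`, equipped with a Frobenius-semilinear endomorphism `φ`, `M` decomposes
as a direct sum `M = M_unit ⊕ M_nil` of `φ`-stable submodules on which `φ` is respectively
bijective and topologically nilpotent (`φ^[K] (M_nil) ⊆ p^n M` for `K` large). -/
theorem witt_fitting_decomposition (p : ℕ) [Fact p.Prime]
    {k : Type} [Field k] [CharP k p] [PerfectRing k p]
    {M : Type} [AddCommGroup M] [Module (WittVector p k) M]
    [Module.Free (WittVector p k) M] [Module.Finite (WittVector p k) M]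
    (φ : M →ₛₗ[(WittVector.frobenius : WittVector p k →+* WittVector p k)] M) :
    ∃ Munit Mnil : Submodule (WittVector p k) M,
      IsCompl Munit Mnil ∧
      (∀ x ∈ Munit, φ x ∈ Munit) ∧
      (∀ x ∈ Mnil, φ x ∈ Mnil) ∧
      Set.BijOn ⇑φ (Munit : Set M) (Munit : Set M) ∧
      (∀ n : ℕ, ∃ K : ℕ, ∀ x ∈ Mnil,
        (⇑φ)^[K] x ∈ (Ideal.span {(p : WittVector p k)} ^ n • ⊤ : Submodule (WittVector p k) M)) := by
  have := WittVector.isDiscreteValuationRing (p := p) (k := k)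
  set I := Ideal.span {(p : WittVector p k)}
  have hp : (p : WittVector p k) ≠ 0 := (WittVector.irreducible p).ne_zero
  have hI : I ≤ I.comap WittVector.frobenius := Ideal.span_natCast_le_comap _ p
  have hArt (n : ℕ) : IsArtinian _ (M ⧸ (I ^ n • ⊤ : Submodule _ M)) :=
    have := isArtinianRing_quotient_span_singleton_pow hp n
    isArtinian_quotient_smul_top _
  have : IsHausdorff I M := .of_isLocalRing I M
    (Ideal.span_singleton_ne_top (WittVector.irreducible p).not_isUnit)
  have : IsPrecomplete I M := (Module.Free.chooseBasis _ M).isPrecomplete I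
  exact ⟨φ.unitPart I, φ.nilPart I,
    ⟨φ.disjoint_unitPart_nilPart hI, φ.codisjoint_unitPart_nilPart hI hArt⟩,
    φ.mapsTo_unitPart hI, φ.mapsTo_nilPart hI,
    ⟨φ.mapsTo_unitPart hI, φ.injOn_unitPart hI, φ.surjOn_unitPart hI hArt⟩,
    φ.exists_iterate_mem_of_mem_nilPart hI⟩
end

section
/- Let R be a commutative ring with subrings A, B and an ideal I of R such that R = A + I, A ∩ I = fA for some f ∈ I which is a non-zero-divisor, and such that 1 + fM is invertible in Mat_d(A) for every M ∈ Mat_d(A). If A ∈ Mat_d(R) decomposes as A = B + C with B ∈ Mat_d(A), C ∈ Mat_d(I), and there exists A' ∈ Mat_d(R) with A·A' = Id, then there exists B' ∈ Mat_d(A) with B·B' = Id. -/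
/-!
Lift `A'` entrywise along `R = A + I` to a matrix `B₁` over `A`. Since `B ≡ Am` and `B₁ ≡ A'`
modulo `I`, the matrix `B * B₁ - 1` lies over `A ∩ I = f A`, say `B * B₁ = 1 + f • D`; then
`B₁ * (1 + f • D)⁻¹` is a right inverse of `B` over `A`.
-/

open Matrix

namespace Ideal

variable {n R : Type*} [Fintype n] [DecidableEq n] [Ring R]

theorem mapMatrix_mk_eq_iff (I : Ideal R) [I.IsTwoSided] {X Y : Matrix n n R} :
    (Quotient.mk I).mapMatrix X = (Quotient.mk I).mapMatrix Y ↔ X - Y ∈ I.matrix n := by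
  simp only [← Matrix.ext_iff, RingHom.mapMatrix_apply, map_apply, Quotient.eq, mem_matrix,
    Matrix.sub_apply]

theorem mul_sub_mul_mem_matrix (I : Ideal R) [I.IsTwoSided] {X X' Y Y' : Matrix n n R}
    (hX : X - X' ∈ I.matrix n) (hY : Y - Y' ∈ I.matrix n) : X * Y - X' * Y' ∈ I.matrix n := by
  rw [← mapMatrix_mk_eq_iff] at hX hY ⊢
  rw [map_mul, map_mul, hX, hY]

theorem exists_mem_matrix_sub_mem_matrix {A : Subring R} {I : Ideal R}
    (hsum : ∀ x : R, ∃ a ∈ A, x - a ∈ I) (X : Matrix n n R) :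
    ∃ Y ∈ A.matrix, X - Y ∈ I.matrix n := by
  choose Y hYA hYI using fun i j => hsum (X i j)
  exact ⟨of Y, hYA, hYI⟩

theorem exists_eq_smul_of_mem_matrix {A : Subring R} {I : Ideal R} {f : R}
    (hcap : ∀ x ∈ A, x ∈ I → ∃ a ∈ A, x = f * a) {M : Matrix n n R}
    (hMA : M ∈ A.matrix) (hMI : M ∈ I.matrix n) : ∃ D ∈ A.matrix, M = f • D := by
  choose D hDA hMD using fun i j => hcap _ (hMA i j) (hMI i j)
  exact ⟨of D, hDA, Matrix.ext hMD⟩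

end Ideal

open Ideal in
theorem abstract_matrix_lift_general {R : Type} [CommRing R] (A : Subring R) (I : Ideal R)
    (f : R)
    (hsum : ∀ x : R, ∃ a ∈ A, x - a ∈ I)
    (hcap : ∀ x ∈ A, x ∈ I → ∃ a ∈ A, x = f * a)
    {d : ℕ}
    (hinv : ∀ M : Matrix (Fin d) (Fin d) R, (∀ i j, M i j ∈ A) →
      ∃ N : Matrix (Fin d) (Fin d) R, (∀ i j, N i j ∈ A) ∧
        (1 + f • M) * N = 1 ∧ N * (1 + f • M) = 1)
    (Am B C A' : Matrix (Fin d) (Fin d) R)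
    (hB : ∀ i j, B i j ∈ A) (hC : ∀ i j, C i j ∈ I)
    (hAm : Am = B + C) (hA' : Am * A' = 1) :
    ∃ B' : Matrix (Fin d) (Fin d) R, (∀ i j, B' i j ∈ A) ∧ B * B' = 1 := by
  obtain ⟨B₁, hB₁A, hB₁I⟩ := exists_mem_matrix_sub_mem_matrix hsum A'
  have hBAm : B - Am ∈ I.matrix _ := by
    rw [hAm, sub_add_cancel_left]
    exact neg_mem hC
  have hA : B * B₁ - 1 ∈ A.matrix := sub_mem (mul_mem hB hB₁A) (one_mem _)
  have hI : B * B₁ - 1 ∈ I.matrix _ := by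
    simpa only [hA'] using mul_sub_mul_mem_matrix I hBAm (sub_mem_comm_iff.mp hB₁I)
  obtain ⟨D, hDA, hBB₁⟩ := exists_eq_smul_of_mem_matrix hcap hA hI
  obtain ⟨N, hNA, hN, -⟩ := hinv D hDA
  refine ⟨B₁ * N, mul_mem hB₁A hNA, ?_⟩
  rw [← Matrix.mul_assoc, sub_eq_iff_eq_add'.mp hBB₁, hN]

/-- Abstract matrix lifting lemma.  `R` is a commutative ring with subring `A` and
ideal `I` such that `R = A + I`, `A ∩ I = f·A` for a non-zero-divisor `f ∈ I ∩ A`, and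
`Id + f·M` is invertible in `Mat_d(A)` for every `M ∈ Mat_d(A)`.  If a matrix `Am = B + C` with
`B` over `A`, `C` over `I` satisfies `Am·A' = Id`, then there is `B'` over `A` with
`B·B' = Id`. -/
theorem abstract_matrix_lift {R : Type} [CommRing R] (A : Subring R) (I : Ideal R)
    (f : R) (hfI : f ∈ I) (hfA : f ∈ A)
    (hsum : ∀ x : R, ∃ a ∈ A, x - a ∈ I)
    (hcap : ∀ x ∈ A, x ∈ I → ∃ a ∈ A, x = f * a)
    (hreg : ∀ x : R, f * x = 0 → x = 0)
    {d : ℕ}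
    (hinv : ∀ M : Matrix (Fin d) (Fin d) R, (∀ i j, M i j ∈ A) →
      ∃ N : Matrix (Fin d) (Fin d) R, (∀ i j, N i j ∈ A) ∧
        (1 + f • M) * N = 1 ∧ N * (1 + f • M) = 1)
    (Am B C A' : Matrix (Fin d) (Fin d) R)
    (hB : ∀ i j, B i j ∈ A) (hC : ∀ i j, C i j ∈ I)
    (hAm : Am = B + C) (hA' : Am * A' = 1) :
    ∃ B' : Matrix (Fin d) (Fin d) R, (∀ i j, B' i j ∈ A) ∧ B * B' = 1 :=
  abstract_matrix_lift_general A I f hsum hcap hinv Am B C A' hB hC hAm hA'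
end

section
/- Let R be a p-adically complete ring (p a non-zero-divisor), and suppose sequences of matrices B_n ∈ Mat_d(R), C_n ∈ Mat_d(R), Q_n ∈ p·Mat_d(R) satisfy C_{n+1} = B_n φ(C_n) φ(B_n'), B_{n+1} = B_n + C_{n+1} t + Q_n, with B_n B_n' = E^{p−1}·Id for a fixed E ∈ R with φ(E)^{p−1} ∈ p^{p−1}R^× conventions ensuring C_i φ(B_{i−1}) ∈ p·Mat_d(R), for a ring endomorphism φ of R and fixed t ∈ R. If the products ∏_{i=0}^n φ^i(B_0) converge to 0 p-adically as n → ∞, then C_{n+1} ∈ p·Mat_d(R) for all sufficiently large n. -/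
/-!
Reduce modulo `p` and let `f n = B_n φ(B_{n-1}) ⋯ φⁿ(B_0)` be the front part of `C_{n+1}`,
so that `C_{n+1} = f n · X_n`. Since `B_{m+1} - B_m ≡ t C_{m+1}` and `C_{m+1} φ(f m) ≡ 0`, one has
`f (m+1) = B_{m+1} φ(f m) ≡ B_m φ(f m)`; feeding the induction hypothesis `f m ≡ f (m-1) φᵐ(B_0)`
into this gives `f (m+1) ≡ f m φ^{m+1}(B_0)`, hence `f n ≡ ∏ φⁱ(B_0) ≡ 0` for large `n`.
-/

section FrontProd

variable {A : Type*} [Ring A]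

/-- `b n * σ (b (n - 1)) * ⋯ * σ^[n] (b 0)` -/
def frontProd (σ : A →+* A) (b : ℕ → A) : ℕ → A
  | 0 => b 0
  | n + 1 => b (n + 1) * σ (frontProd σ b n)

variable {σ : A →+* A} {b : ℕ → A}

theorem frontProd_succ_eq_mul
    (h : ∀ m, b (m + 1) * σ (frontProd σ b m) = b m * σ (frontProd σ b m)) (n : ℕ) :
    frontProd σ b (n + 1) = frontProd σ b n * σ^[n + 1] (b 0) := by
  induction n with
  | zero => exact h 0
  | succ n ih =>
    calc frontProd σ b (n + 2) = b (n + 1) * σ (frontProd σ b (n + 1)) := h (n + 1)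
      _ = b (n + 1) * σ (frontProd σ b n) * σ^[n + 2] (b 0) := by
        rw [ih, map_mul, mul_assoc, Function.iterate_succ_apply' σ (n + 1)]
      _ = frontProd σ b (n + 1) * σ^[n + 2] (b 0) := rfl

theorem frontProd_eq_prod
    (h : ∀ m, b (m + 1) * σ (frontProd σ b m) = b m * σ (frontProd σ b m)) (n : ℕ) :
    frontProd σ b n = ((List.range (n + 1)).map fun l => σ^[l] (b 0)).prod := by
  induction n with
  | zero => simp [frontProd]
  | succ n ih =>
    rw [frontProd_succ_eq_mul h, ih, List.range_succ (n := n + 1), List.map_append,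
      List.prod_append, List.map_singleton, List.prod_singleton]

theorem exists_eq_frontProd_mul {c y : ℕ → A} (hc : ∀ n, c (n + 1) = b n * σ (c n) * y n)
    (n : ℕ) : ∃ x, c (n + 1) = frontProd σ b n * x := by
  induction n with
  | zero => exact ⟨σ (c 0) * y 0, by rw [hc, mul_assoc, frontProd]⟩
  | succ n ih =>
    obtain ⟨x, hx⟩ := ih
    exact ⟨σ x * y (n + 1), by rw [hc, hx, map_mul, frontProd, mul_assoc, mul_assoc, mul_assoc]⟩

theorem mul_frontProd_eq_zero {c : ℕ → A} (hcb : ∀ n, c (n + 1) * σ (b n) = 0) (n : ℕ) :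
    c (n + 1) * σ (frontProd σ b n) = 0 := by
  cases n with
  | zero => exact hcb 0
  | succ n => rw [frontProd, map_mul, ← mul_assoc, hcb, zero_mul]

theorem eventually_eq_zero_of_prod_iterate {S : Type*} [SMulZeroClass S A]
    [IsScalarTower S A A] (t : S) {c y : ℕ → A}
    (hc : ∀ n, c (n + 1) = b n * σ (c n) * y n) (hb : ∀ n, b (n + 1) = b n + t • c (n + 1))
    (hcb : ∀ n, c (n + 1) * σ (b n) = 0)
    (hprod : ∃ N, ∀ n ≥ N, ((List.range (n + 1)).map fun l => σ^[l] (b 0)).prod = 0) :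
    ∃ N, ∀ n ≥ N, c (n + 1) = 0 := by
  have hfront : ∀ m, b (m + 1) * σ (frontProd σ b m) = b m * σ (frontProd σ b m) := fun m => by
    rw [hb, add_mul, smul_mul_assoc, mul_frontProd_eq_zero hcb, smul_zero, add_zero]
  obtain ⟨N, hN⟩ := hprod
  refine ⟨N, fun n hn => ?_⟩
  obtain ⟨x, hx⟩ := exists_eq_frontProd_mul hc n
  rw [hx, frontProd_eq_prod hfront, hN n hn, zero_mul]

end FrontProd

theorem RingHom.mapMatrix_iterate_apply {R m : Type*} [Semiring R] [Fintype m] [DecidableEq m]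
    (f : R →+* R) (l : ℕ) (M : Matrix m m R) : f.mapMatrix^[l] M = M.map (⇑f)^[l] := by
  induction l with
  | zero => exact M.map_id.symm
  | succ l ih =>
    rw [Function.iterate_succ_apply', ih, RingHom.mapMatrix_apply, Matrix.map_map,
      ← Function.iterate_succ']

theorem eventually_divisible_by_p_general (p : ℕ)
    {R : Type} [CommRing R]
    (φ : R →+* R) (t : R) {d : ℕ}
    (B B' C Q : ℕ → Matrix (Fin d) (Fin d) R)
    (hQp : ∀ n, ∀ i j, Q n i j ∈ Ideal.span {(p : R)})
    (hC : ∀ n, C (n + 1) = B n * (C n).map ⇑φ * (B' n).map ⇑φ)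
    (hB : ∀ n, B (n + 1) = B n + t • C (n + 1) + Q n)
    (hconv : ∀ n, ∀ i j, (C (n + 1) * (B n).map ⇑φ) i j ∈ Ideal.span {(p : R)})
    (hlim : ∀ m : ℕ, ∃ N : ℕ, ∀ n ≥ N, ∀ i j,
      (((List.range (n + 1)).map fun l => (B 0).map ((⇑φ)^[l])).prod) i j ∈
        Ideal.span {(p : R)} ^ m) :
    ∃ N : ℕ, ∀ n ≥ N, ∀ i j, C (n + 1) i j ∈ Ideal.span {(p : R)} := by
  set I := Ideal.span {(p : R)}
  have hφI : I ≤ I.comap φ := Ideal.span_le.2 <| by simp [I]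
  set σ := (Ideal.quotientMap I φ hφI).mapMatrix (m := Fin d)
  set π := (Ideal.Quotient.mk I).mapMatrix (m := Fin d)
  have hπ : ∀ M, π M = 0 ↔ ∀ i j, M i j ∈ I := fun M => by
    simp [π, ← Matrix.ext_iff, Ideal.Quotient.eq_zero_iff_mem]
  have hπφ : Function.Semiconj π φ.mapMatrix σ := fun M => by
    ext i j
    simp [π, σ, Ideal.quotientMap_mk]
  obtain ⟨N, hN⟩ := eventually_eq_zero_of_prod_iterate (σ := σ) (b := fun n => π (B n))
    (c := fun n => π (C n)) (y := fun n => π ((B' n).map φ)) (Ideal.Quotient.mk I t)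
    (fun n => by simp only [hC, map_mul, ← RingHom.mapMatrix_apply, hπφ _])
    (fun n => by
      rw [hB, map_add, (hπ _).2 (hQp n), add_zero, map_add]
      simp [π, Matrix.map_smul'])
    (fun n => by rw [← hπφ, ← map_mul, hπ]; exact hconv n)
    (by
      obtain ⟨N, hN⟩ := hlim 1
      refine ⟨N, fun n hn => ?_⟩
      have hprod := (hπ _).2 (by simpa only [pow_one] using hN n hn)
      rw [map_list_prod, List.map_map] at hprod
      simpa only [Function.comp_def, ← RingHom.mapMatrix_iterate_apply,
        (hπφ.iterate_right _).eq] using hprod)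
  exact ⟨N, fun n hn => (hπ _).1 (hN n hn)⟩

/-- Key convergence argument in the essential surjectivity proof.  Over a
`p`-adically complete ring `R` with endomorphism `φ`, given sequences of matrices `B_n`, `C_n`,
and `Q_n ∈ p·Mat_d(R)` with `C_{n+1} = B_n φ(C_n) φ(B_n')`, `B_{n+1} = B_n + t·C_{n+1} + Q_n`,
`B_n B_n' = E^{p−1}·Id`, and `C_{i+1} φ(B_i) ∈ p·Mat_d(R)`: if the products
`∏_{i=0}^n φ^i(B_0)` tend to `0` `p`-adically, then `C_{n+1} ∈ p·Mat_d(R)` for all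
sufficiently large `n`. -/
theorem eventually_divisible_by_p (p : ℕ) [Fact p.Prime]
    {R : Type} [CommRing R] [IsAdicComplete (Ideal.span {(p : R)}) R]
    (φ : R →+* R) (t E : R) {d : ℕ}
    (B B' C Q : ℕ → Matrix (Fin d) (Fin d) R)
    (hQp : ∀ n, ∀ i j, Q n i j ∈ Ideal.span {(p : R)})
    (hC : ∀ n, C (n + 1) = B n * (C n).map ⇑φ * (B' n).map ⇑φ)
    (hB : ∀ n, B (n + 1) = B n + t • C (n + 1) + Q n)
    (hBB' : ∀ n, B n * B' n = E ^ (p - 1) • 1)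
    (hconv : ∀ n, ∀ i j, (C (n + 1) * (B n).map ⇑φ) i j ∈ Ideal.span {(p : R)})
    (hlim : ∀ m : ℕ, ∃ N : ℕ, ∀ n ≥ N, ∀ i j,
      (((List.range (n + 1)).map fun l => (B 0).map ((⇑φ)^[l])).prod) i j ∈
        Ideal.span {(p : R)} ^ m) :
    ∃ N : ℕ, ∀ n ≥ N, ∀ i j, C (n + 1) i j ∈ Ideal.span {(p : R)} :=
  eventually_divisible_by_p_general p φ t B B' C Q hQp hC hB hconv hlim
end

section
/- Let S be the p-adically completed PD-envelope of W(k)[u] along (E(u)), D a finite-dimensional K₀-vector space with σ-semilinear bijective-on-D⊗K₀ Frobenius φ_D and K₀-linear N_D with N_D φ_D = p φ_D N_D, and give 𝒟 = S ⊗_{W(k)} D the operator N = N_S ⊗ 1 + 1 ⊗ N_D where N_S is the W(k)-derivation of S with N_S(u) = −u. Suppose 𝓜 ⊂ 𝒟 is a finite free S-lattice spanning 𝒟 over S[1/p], stable under φ = φ_S ⊗ φ_D, and that 𝓜^m = ∩_{n≥1}(φ*)^n𝓜 where (φ*)^n𝓜 is the S-span of φ^n(𝓜). If p^k N(𝓜)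 ⊆ 𝓜 for some k ≥ 0, then N(𝓜^m) ⊆ 𝓜^m. -/
/-!
Since `N φ = p φ N`, iterating gives `N (φⁿ x) = pⁿ φⁿ (N x)`; for `n ≥ k` this is
`p^(n-k) φⁿ (p^k N x)`, which lies in `(φ*)ⁿ 𝓜` when `x ∈ 𝓜`. By the Leibniz rule `N` then
preserves the whole `S`-span `(φ*)ⁿ 𝓜`. These spans decrease with `n`, so their intersection
equals the intersection over `n ≥ k` and is `N`-stable as well.
-/

section Semilinear

variable {R M : Type*} [Semiring R] [AddCommMonoid M] [Module R M] {σ : R →+* R}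

theorem LinearMap.iterate_map_smul_of_isFixedPt (f : M →ₛₗ[σ] M) {c : R}
    (hc : Function.IsFixedPt σ c) (n : ℕ) (x : M) : f^[n] (c • x) = c • f^[n] x :=
  Function.Commute.iterate_left (fun y => by rw [map_smulₛₗ, hc.eq]) n x

theorem LinearMap.map_iterate_of_map_apply_eq_smul (f : M →ₛₗ[σ] M) (N : M →+ M) {c : R}
    (hc : Function.IsFixedPt σ c) (hN : ∀ x, N (f x) = c • f (N x)) (n : ℕ) (x : M) :
    N (f^[n] x) = c ^ n • f^[n] (N x) := by
  induction n with
  | zero => simp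
  | succ n ih =>
    have hcn : σ (c ^ n) = c ^ n := by rw [map_pow, hc.eq]
    rw [Function.iterate_succ_apply', Function.iterate_succ_apply', hN, ih, map_smulₛₗ, hcn,
      smul_smul, pow_succ']

theorem LinearMap.span_iterate_image_antitone (f : M →ₛₗ[σ] M) {s : Set M}
    (hs : Set.MapsTo f s s) : Antitone fun n => Submodule.span R (f^[n] '' s) := by
  intro n m hnm
  obtain ⟨d, rfl⟩ := Nat.exists_eq_add_of_le hnm
  apply Submodule.span_mono
  rw [Function.iterate_add, Set.image_comp]
  exact Set.image_mono ((hs.iterate _).image_subset)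

end Semilinear

theorem Submodule.map_mem_span_of_leibniz {R M : Type*} [Semiring R] [AddCommMonoid M]
    [Module R M] (D : R → R) (N : M →+ M) (hLeib : ∀ (r : R) (x : M), N (r • x) = D r • x + r • N x)
    {s : Set M} (hs : ∀ x ∈ s, N x ∈ Submodule.span R s) {x : M}
    (hx : x ∈ Submodule.span R s) : N x ∈ Submodule.span R s := by
  induction hx using Submodule.span_induction with
  | mem y hy => exact hs y hy
  | zero => simp
  | add y z _ _ hy hz => rw [map_add]; exact add_mem hy hz
  | smul r y hy ihy => rw [hLeib]; exact add_mem (smul_mem _ _ hy) (smul_mem _ _ ihy)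

theorem monodromy_stable_max_mult_part_general (p : ℕ)
    {S 𝒟 : Type} [CommRing S] [AddCommGroup 𝒟] [Module S 𝒟]
    (φS : S →+* S) (NS : S → S)
    (φ : 𝒟 →ₛₗ[φS] 𝒟)
    (N : 𝒟 →+ 𝒟)
    (hLeib : ∀ (s : S) (x : 𝒟), N (s • x) = NS s • x + s • N x)
    (hNφ : ∀ x : 𝒟, N (φ x) = (p : S) • φ (N x))
    (𝓜 : Submodule S 𝒟)
    (hφ𝓜 : ∀ x ∈ 𝓜, φ x ∈ 𝓜)
    (k : ℕ) (hk : ∀ x ∈ 𝓜, (p : S) ^ k • N x ∈ 𝓜) :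
    ∀ x ∈ (⨅ n : ℕ, Submodule.span S ((⇑φ)^[n + 1] '' (𝓜 : Set 𝒟))),
      N x ∈ (⨅ n : ℕ, Submodule.span S ((⇑φ)^[n + 1] '' (𝓜 : Set 𝒟))) := by
  have hp : φS (p : S) = p := map_natCast φS p
  have hstable : ∀ n, k ≤ n → ∀ x ∈ Submodule.span S ((⇑φ)^[n] '' (𝓜 : Set 𝒟)),
      N x ∈ Submodule.span S ((⇑φ)^[n] '' (𝓜 : Set 𝒟)) := by
    intro n hkn x hx
    refine Submodule.map_mem_span_of_leibniz NS N hLeib ?_ hx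
    rintro _ ⟨m, hm, rfl⟩
    have hpk : φS ((p : S) ^ k) = (p : S) ^ k := by rw [map_pow, hp]
    rw [φ.map_iterate_of_map_apply_eq_smul N hp hNφ, ← Nat.sub_add_cancel hkn, pow_add,
      mul_smul, ← φ.iterate_map_smul_of_isFixedPt hpk]
    exact Submodule.smul_mem _ _ (Submodule.subset_span ⟨_, hk m hm, rfl⟩)
  have hanti := φ.span_iterate_image_antitone (s := (𝓜 : Set 𝒟)) hφ𝓜
  intro x hx
  simp only [Submodule.mem_iInf] at hx ⊢
  intro n
  exact hanti (by omega : n + 1 ≤ max n k + 1) (hstable _ (by omega) x (hx (max n k)))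

/-- Monodromy stability of the maximal multiplicative part.  Let `𝒟 = S ⊗ D` with
`N = N_S ⊗ 1 + 1 ⊗ N_D` (abstracted as an additive operator `N` satisfying the Leibniz rule
over a derivation `N_S` of `S` and `N φ = p φ N`), and `𝓜 ⊆ 𝒟` a `φ`-stable finite free
`S`-lattice spanning `𝒟` over `S[1/p]`.  If `p^k N(𝓜) ⊆ 𝓜` for some `k ≥ 0`, then
`N(𝓜^m) ⊆ 𝓜^m` where `𝓜^m = ∩_{n≥1}(φ*)^n 𝓜`. -/
theorem monodromy_stable_max_mult_part (p : ℕ) [Fact p.Prime]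
    {S 𝒟 : Type} [CommRing S] [AddCommGroup 𝒟] [Module S 𝒟]
    (φS : S →+* S) (NS : S → S)
    (hNSadd : ∀ a b : S, NS (a + b) = NS a + NS b)
    (hNSmul : ∀ a b : S, NS (a * b) = NS a * b + a * NS b)
    (φ : 𝒟 →ₛₗ[φS] 𝒟)
    (N : 𝒟 →+ 𝒟)
    (hLeib : ∀ (s : S) (x : 𝒟), N (s • x) = NS s • x + s • N x)
    (hNφ : ∀ x : 𝒟, N (φ x) = (p : S) • φ (N x))
    (𝓜 : Submodule S 𝒟)
    [Module.Free S 𝓜] [Module.Finite S 𝓜]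
    (hlat : ∀ x : 𝒟, ∃ n : ℕ, (p : S) ^ n • x ∈ 𝓜)
    (hφ𝓜 : ∀ x ∈ 𝓜, φ x ∈ 𝓜)
    (k : ℕ) (hk : ∀ x ∈ 𝓜, (p : S) ^ k • N x ∈ 𝓜) :
    ∀ x ∈ (⨅ n : ℕ, Submodule.span S ((⇑φ)^[n + 1] '' (𝓜 : Set 𝒟))),
      N x ∈ (⨅ n : ℕ, Submodule.span S ((⇑φ)^[n + 1] '' (𝓜 : Set 𝒟))) :=
  monodromy_stable_max_mult_part_general p φS NS φ N hLeib hNφ 𝓜 hφ𝓜 k hk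
end
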